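/- Let G be a simple graph on n ≥ 2 vertices. Then s(G) = 2n − 3 if and only if G is the complete graph K_n, and s(G) = 2n − 4 if and only if G is K_n with exactly one edge removed. -/

import Mathlib

/-!
For an injective labeling with smallest label `m` and largest label `M`, the sums `m + x`
(`x ≠ m`) are at most `m + M`, while the sums `x + M` (`x ≠ m, M`) exceed it; these are `2n - 3`
distinct sums over pairs of distinct vertices. Hence `s(Kₙ) ≥ 2n - 3`, and deleting one edge loses
at most one sum. Conversely, numbering the vertices `0, …, n - 1` puts all sums in `[1, 2n - 3]`.
A non-edge labeled `{0, 1}` removes the sum `1`; two non-edges remove two extreme sums, either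
`1, 2` (labels `{0, 1}, {0, 2}` when they share a vertex) or `1, 2n - 3` (labels `{0, 1}` and
`{n - 2, n - 1}`). So every graph other than `Kₙ` has sum index at most `2n - 4`, and every graph
with two non-edges at most `2n - 5`.
-/

open SimpleGraph Function

def edgePlus {V : Type*} (f : V → ℤ) : Sym2 V → ℤ :=
  Sym2.lift ⟨fun u v => f u + f v, fun u v => by ring⟩

def edgeMinus {V : Type*} (f : V → ℤ) : Sym2 V → ℤ :=
  Sym2.lift ⟨fun u v => |f u - f v|, fun u v => abs_sub_comm _ _⟩

/-- The sum index: the minimum, over injective vertex labelings `f : V → ℤ`,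
of the number of distinct values of `f⁺(uv) = f u + f v` on the edges. -/
noncomputable def sumIndex {V : Type*} (G : SimpleGraph V) : ℕ :=
  sInf {k | ∃ f : V → ℤ, Function.Injective f ∧ (edgePlus f '' G.edgeSet).ncard = k}

/-- The difference index: the minimum, over injective vertex labelings `f : V → ℤ`,
of the number of distinct values of `f⁻(uv) = |f u − f v|` on the edges. -/
noncomputable def diffIndex {V : Type*} (G : SimpleGraph V) : ℕ :=
  sInf {k | ∃ f : V → ℤ, Function.Injective f ∧ (edgeMinus f '' G.edgeSet).ncard = k}

open Finset

theorem Finset.two_mul_card_sub_three_le_card_image_add_offDiag (S : Finset ℤ) :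
    2 * #S - 3 ≤ #(S.offDiag.image fun p => p.1 + p.2) := by
  rcases lt_or_ge #S 2 with hS | hS
  · omega
  have hne : S.Nonempty := card_pos.1 (by omega)
  set m := S.min' hne
  set M := S.max' hne
  have hmM : m < M := S.min'_lt_max'_of_card hS
  set low := (S.erase m).image (m + ·)
  set high := ((S.erase m).erase M).image (· + M)
  have hdisj : Disjoint low high := by
    simp only [low, high, disjoint_left, mem_image, mem_erase]
    rintro _ ⟨x, ⟨-, hx⟩, rfl⟩ ⟨y, ⟨-, hym, hy⟩, hxy⟩
    have := S.le_max' x hx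
    have := (S.min'_le y hy).lt_of_ne' hym
    omega
  have hsub : low ∪ high ⊆ S.offDiag.image fun p => p.1 + p.2 := by
    refine union_subset ?_ ?_ <;> intro t ht <;> rw [mem_image] <;>
      simp only [low, high, mem_image, mem_erase] at ht
    · obtain ⟨x, ⟨hxm, hx⟩, rfl⟩ := ht
      exact ⟨(m, x), mem_offDiag.2 ⟨S.min'_mem hne, hx, Ne.symm hxm⟩, rfl⟩
    · obtain ⟨x, ⟨hxM, -, hx⟩, rfl⟩ := ht
      exact ⟨(x, M), mem_offDiag.2 ⟨hx, S.max'_mem hne, hxM⟩, rfl⟩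
  calc 2 * #S - 3 = #low + #high := by
        rw [card_image_of_injective _ (add_right_injective m),
          card_image_of_injective _ (add_left_injective M),
          card_erase_of_mem (mem_erase.2 ⟨hmM.ne', S.max'_mem hne⟩),
          card_erase_of_mem (S.min'_mem hne)]
        omega
    _ = #(low ∪ high) := (card_union_of_disjoint hdisj).symm
    _ ≤ _ := card_le_card hsub

lemma SimpleGraph.eq_top_deleteEdges_singleton {V : Type*} {G : SimpleGraph V} {e : Sym2 V}
    (he : e ∉ G.edgeSet) (h : ∀ u v, u ≠ v → ¬ G.Adj u v → s(u, v) = e) :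
    G = (⊤ : SimpleGraph V).deleteEdges {e} := by
  ext u v
  simp only [deleteEdges_adj, top_adj, Set.mem_singleton_iff]
  refine ⟨fun huv => ⟨huv.ne, fun h => he (h ▸ huv)⟩, fun ⟨huv, hne⟩ => ?_⟩
  by_contra hnadj
  exact hne (h u v huv hnadj)

section SumIndex

variable {V : Type*}

lemma sumIndex_le_ncard (G : SimpleGraph V) {f : V → ℤ} (hf : Injective f) :
    sumIndex G ≤ (edgePlus f '' G.edgeSet).ncard :=
  Nat.sInf_le ⟨f, hf, rfl⟩

lemma le_sumIndex [Countable V] {G : SimpleGraph V} {k : ℕ}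
    (h : ∀ f : V → ℤ, Injective f → k ≤ (edgePlus f '' G.edgeSet).ncard) : k ≤ sumIndex G := by
  obtain ⟨g, hg⟩ := exists_injective_nat V
  exact le_csInf ⟨_, _, Nat.cast_injective.comp hg, rfl⟩ (by rintro _ ⟨f, hf, rfl⟩; exact h f hf)

lemma sumIndex_le_of_adj_mem_Icc {G : SimpleGraph V} {f : V → ℤ} (hf : Injective f) {lo hi : ℤ}
    (h : ∀ u v, G.Adj u v → f u + f v ∈ Set.Icc lo hi) : sumIndex G ≤ (hi + 1 - lo).toNat := by
  refine (sumIndex_le_ncard G hf).trans ?_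
  rw [← Int.card_Icc, ← Set.ncard_coe_finset, coe_Icc]
  refine Set.ncard_le_ncard ?_ (Set.finite_Icc lo hi)
  rintro _ ⟨e, he, rfl⟩
  induction e using Sym2.ind with
  | h u v => exact h u v he

lemma two_mul_card_sub_three_le_ncard_edgePlus_top [Fintype V] {f : V → ℤ} (hf : Injective f) :
    2 * Fintype.card V - 3 ≤ (edgePlus f '' (⊤ : SimpleGraph V).edgeSet).ncard := by
  have hsub : (((univ.image f).offDiag.image fun p => p.1 + p.2 : Finset ℤ) : Set ℤ) ⊆
      edgePlus f '' (⊤ : SimpleGraph V).edgeSet := by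
    intro t ht
    obtain ⟨⟨_, _⟩, hp, rfl⟩ := mem_image.1 ht
    obtain ⟨⟨u, -, rfl⟩, ⟨v, -, rfl⟩, huv⟩ := by simpa only [mem_offDiag, mem_image] using hp
    exact ⟨s(u, v), by simpa using ne_of_apply_ne f huv, rfl⟩
  calc 2 * Fintype.card V - 3 = 2 * #(univ.image f) - 3 := by
        rw [card_image_of_injective _ hf, card_univ]
    _ ≤ _ := (univ.image f).two_mul_card_sub_three_le_card_image_add_offDiag
    _ = _ := (Set.ncard_coe_finset _).symm
    _ ≤ _ := Set.ncard_le_ncard hsub (Set.toFinite _)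

lemma ncard_edgePlus_sub_one_le_deleteEdges_singleton [Finite V] (G : SimpleGraph V)
    (f : V → ℤ) (e : Sym2 V) :
    (edgePlus f '' G.edgeSet).ncard - 1 ≤ (edgePlus f '' (G.deleteEdges {e}).edgeSet).ncard :=
  calc (edgePlus f '' G.edgeSet).ncard - 1
      = (edgePlus f '' G.edgeSet).ncard - ({edgePlus f e} : Set ℤ).ncard := by
        rw [Set.ncard_singleton]
    _ ≤ (edgePlus f '' G.edgeSet \ {edgePlus f e}).ncard := Set.le_ncard_sdiff _ _
    _ ≤ _ := by
      refine Set.ncard_le_ncard ?_ (Set.toFinite _)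
      rintro _ ⟨⟨e', he', rfl⟩, hne⟩
      exact ⟨e', by rw [edgeSet_deleteEdges]; exact ⟨he', fun h => hne (congrArg _ h)⟩, rfl⟩

lemma not_adj_of_labels {G : SimpleGraph V} {f : V → ℤ} (hf : Injective f) {a b u v : V}
    (hab : ¬ G.Adj a b) (h : f u = f a ∧ f v = f b ∨ f u = f b ∧ f v = f a) : ¬ G.Adj u v := by
  rcases h with ⟨hu, hv⟩ | ⟨hu, hv⟩ <;> rw [hf hu, hf hv]
  exacts [hab, fun h => hab h.symm]

end SumIndex

section UpperBounds

variable {V : Type*} [Fintype V]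

lemma exists_injective_labeling_eqOn {s : Set V} {f₀ : V → ℤ}
    (hmaps : Set.MapsTo f₀ s (Set.Ico 0 (Fintype.card V))) (hinj : Set.InjOn f₀ s) :
    ∃ f : V → ℤ, Injective f ∧ (∀ v, f v ∈ Set.Ico 0 (Fintype.card V : ℤ)) ∧ Set.EqOn f f₀ s := by
  obtain ⟨g, hg⟩ := Set.MapsTo.exists_equiv_extend_of_card_eq (t := Ico 0 (Fintype.card V : ℤ))
    (by simp) (by rwa [coe_Ico]) hinj
  exact ⟨fun v => g v, Subtype.val_injective.comp g.injective,
    fun v => mem_Ico.1 (g v).2, hg⟩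

lemma sumIndex_le_two_mul_card_sub_three (G : SimpleGraph V) :
    sumIndex G ≤ 2 * Fintype.card V - 3 := by
  obtain ⟨f, hf, hrange, -⟩ := exists_injective_labeling_eqOn (s := (∅ : Set V))
    (f₀ := 0) (Set.mapsTo_empty _ _) (Set.injOn_empty _)
  have := sumIndex_le_of_adj_mem_Icc (G := G) hf (lo := 1) (hi := 2 * Fintype.card V - 3)
    fun u v huv => by
      have := hrange u; have := hrange v; have := hf.ne huv.ne
      simp only [Set.mem_Icc, Set.mem_Ico] at *
      omega
  omega

lemma sumIndex_add_four_le_of_not_adj {G : SimpleGraph V} {a b : V} (hab : a ≠ b)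
    (hnadj : ¬ G.Adj a b) : sumIndex G + 4 ≤ 2 * Fintype.card V := by
  classical
  have hn : 1 < Fintype.card V := Fintype.one_lt_card_iff.2 ⟨a, b, hab⟩
  obtain ⟨f, hf, hrange, hfs⟩ := exists_injective_labeling_eqOn (s := {a, b})
    (f₀ := fun v => if v = a then 0 else 1)
    (by rintro v (rfl | rfl) <;> simp [*, Ne.symm]; omega)
    (by rintro v (rfl | rfl) w (rfl | rfl) <;> simp [*, Ne.symm])
  have ha : f a = 0 := by simpa using hfs (by simp : a ∈ ({a, b} : Set V))
  have hb : f b = 1 := by simpa [hab.symm] using hfs (by simp : b ∈ ({a, b} : Set V))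
  have := sumIndex_le_of_adj_mem_Icc (G := G) hf (lo := 2) (hi := 2 * Fintype.card V - 3)
    fun u v huv => by
      have := hrange u; have := hrange v; have := hf.ne huv.ne
      simp only [Set.mem_Icc, Set.mem_Ico] at *
      refine ⟨?_, by omega⟩
      by_contra
      exact not_adj_of_labels hf hnadj (by omega) huv
  omega

lemma sumIndex_add_five_le_of_not_adj_of_not_adj {G : SimpleGraph V} {a b c : V} (hab : a ≠ b)
    (hac : a ≠ c) (hbc : b ≠ c) (h₁ : ¬ G.Adj a b) (h₂ : ¬ G.Adj a c) :
    sumIndex G + 5 ≤ 2 * Fintype.card V := by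
  classical
  have hn : 2 < Fintype.card V := Fintype.two_lt_card_iff.2 ⟨a, b, c, hab, hac, hbc⟩
  obtain ⟨f, hf, hrange, hfs⟩ := exists_injective_labeling_eqOn (s := {a, b, c})
    (f₀ := fun v => if v = a then 0 else if v = b then 1 else 2)
    (by rintro v (rfl | rfl | rfl) <;> simp [*, Ne.symm] <;> omega)
    (by rintro v (rfl | rfl | rfl) w (rfl | rfl | rfl) <;> simp [*, Ne.symm])
  have ha : f a = 0 := by simpa using hfs (by simp : a ∈ ({a, b, c} : Set V))
  have hb : f b = 1 := by simpa [hab.symm] using hfs (by simp : b ∈ ({a, b, c} : Set V))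
  have hc : f c = 2 := by
    simpa [hac.symm, hbc.symm] using hfs (by simp : c ∈ ({a, b, c} : Set V))
  have := sumIndex_le_of_adj_mem_Icc (G := G) hf (lo := 3) (hi := 2 * Fintype.card V - 3)
    fun u v huv => by
      have := hrange u; have := hrange v; have := hf.ne huv.ne
      simp only [Set.mem_Icc, Set.mem_Ico] at *
      refine ⟨?_, by omega⟩
      by_contra
      rcases (by omega : (f u = f a ∧ f v = f b ∨ f u = f b ∧ f v = f a) ∨
          (f u = f a ∧ f v = f c ∨ f u = f c ∧ f v = f a)) with h | h
      exacts [not_adj_of_labels hf h₁ h huv, not_adj_of_labels hf h₂ h huv]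
  omega

lemma sumIndex_add_five_le_of_not_adj_of_not_adj_of_disjoint {G : SimpleGraph V} {a b c d : V}
    (hab : a ≠ b) (hac : a ≠ c) (had : a ≠ d) (hbc : b ≠ c) (hbd : b ≠ d) (hcd : c ≠ d)
    (h₁ : ¬ G.Adj a b) (h₂ : ¬ G.Adj c d) : sumIndex G + 5 ≤ 2 * Fintype.card V := by
  classical
  have hn : 4 ≤ Fintype.card V := by
    simpa [card_insert_of_notMem, *] using card_le_univ {a, b, c, d}
  set n : ℤ := (Fintype.card V : ℤ)
  obtain ⟨f, hf, hrange, hfs⟩ := exists_injective_labeling_eqOn (s := {a, b, c, d})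
    (f₀ := fun v => if v = a then 0 else if v = b then 1 else if v = c then n - 2 else n - 1)
    (by rintro v (rfl | rfl | rfl | rfl) <;> simp [*, Ne.symm] <;> omega)
    (by rintro v (rfl | rfl | rfl | rfl) w (rfl | rfl | rfl | rfl) <;> simp [*, Ne.symm] <;> omega)
  have ha : f a = 0 := by simpa using hfs (by simp : a ∈ ({a, b, c, d} : Set V))
  have hb : f b = 1 := by simpa [hab.symm] using hfs (by simp : b ∈ ({a, b, c, d} : Set V))
  have hc : f c = n - 2 := by
    simpa [hac.symm, hbc.symm] using hfs (by simp : c ∈ ({a, b, c, d} : Set V))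
  have hd : f d = n - 1 := by
    simpa [had.symm, hbd.symm, hcd.symm] using hfs (by simp : d ∈ ({a, b, c, d} : Set V))
  have := sumIndex_le_of_adj_mem_Icc (G := G) hf (lo := 2) (hi := 2 * n - 4)
    fun u v huv => by
      have := hrange u; have := hrange v; have := hf.ne huv.ne
      simp only [Set.mem_Icc, Set.mem_Ico] at *
      constructor <;> by_contra
      · exact not_adj_of_labels hf h₁ (by omega) huv
      · exact not_adj_of_labels hf h₂ (by omega) huv
  omega

end UpperBounds

section CompleteGraph

variable {V : Type*} [Fintype V]

lemma sumIndex_add_five_le_of_two_not_adj {G : SimpleGraph V} {a b c d : V} (hab : a ≠ b)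
    (hcd : c ≠ d) (hne : s(a, b) ≠ s(c, d)) (h₁ : ¬ G.Adj a b) (h₂ : ¬ G.Adj c d) :
    sumIndex G + 5 ≤ 2 * Fintype.card V := by
  have h₁' : ¬ G.Adj b a := fun h => h₁ h.symm
  have h₂' : ¬ G.Adj d c := fun h => h₂ h.symm
  by_cases hac : a = c
  · subst hac
    exact sumIndex_add_five_le_of_not_adj_of_not_adj hab hcd (by rintro rfl; exact hne rfl) h₁ h₂
  by_cases had : a = d
  · subst had
    exact sumIndex_add_five_le_of_not_adj_of_not_adj hab (Ne.symm hcd)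
      (by rintro rfl; exact hne Sym2.eq_swap) h₁ h₂'
  by_cases hbc : b = c
  · subst hbc
    exact sumIndex_add_five_le_of_not_adj_of_not_adj (Ne.symm hab) hcd had h₁' h₂
  by_cases hbd : b = d
  · subst hbd
    exact sumIndex_add_five_le_of_not_adj_of_not_adj (Ne.symm hab) (Ne.symm hcd) hac h₁' h₂'
  exact sumIndex_add_five_le_of_not_adj_of_not_adj_of_disjoint hab hac had hbc hbd hcd h₁ h₂

lemma sumIndex_top : sumIndex (⊤ : SimpleGraph V) = 2 * Fintype.card V - 3 :=
  le_antisymm (sumIndex_le_two_mul_card_sub_three _)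
    (le_sumIndex fun _ hf => two_mul_card_sub_three_le_ncard_edgePlus_top hf)

lemma sumIndex_top_deleteEdges_singleton {e : Sym2 V} (he : e ∈ (⊤ : SimpleGraph V).edgeSet) :
    sumIndex ((⊤ : SimpleGraph V).deleteEdges {e}) = 2 * Fintype.card V - 4 := by
  refine le_antisymm ?_ (le_sumIndex fun f hf => ?_)
  · induction e using Sym2.ind with
    | h a b =>
      have := sumIndex_add_four_le_of_not_adj (G := (⊤ : SimpleGraph V).deleteEdges {s(a, b)})
        (by simpa using he) (by simp)
      omega
  · have := two_mul_card_sub_three_le_ncard_edgePlus_top hf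
    have := ncard_edgePlus_sub_one_le_deleteEdges_singleton ⊤ f e
    omega

end CompleteGraph

theorem stmt10_general {V : Type*} [Fintype V] (G : SimpleGraph V)
    (hn : 2 ≤ Fintype.card V) :
    (sumIndex G = 2 * Fintype.card V - 3 ↔ G = ⊤) ∧
    (sumIndex G = 2 * Fintype.card V - 4 ↔
      ∃ e ∈ (⊤ : SimpleGraph V).edgeSet, G = (⊤ : SimpleGraph V).deleteEdges {e}) := by
  refine ⟨⟨fun h => ?_, fun hG => hG ▸ sumIndex_top⟩, ⟨fun h => ?_, ?_⟩⟩
  · by_contra hG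
    obtain ⟨a, b, hab, hnadj⟩ := ne_top_iff_exists_not_adj.1 hG
    have := sumIndex_add_four_le_of_not_adj hab hnadj
    omega
  · obtain ⟨a, b, hab, hnadj⟩ := ne_top_iff_exists_not_adj.1 fun hG : G = ⊤ => by
      rw [hG, sumIndex_top] at h
      omega
    refine ⟨s(a, b), by simpa using hab, eq_top_deleteEdges_singleton (by simpa using hnadj) ?_⟩
    intro c d hcd hcd'
    by_contra hne
    have := sumIndex_add_five_le_of_two_not_adj hab hcd (Ne.symm hne) hnadj hcd'
    omega
  · rintro ⟨e, he, rfl⟩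
    exact sumIndex_top_deleteEdges_singleton he

theorem stmt10 {V : Type*} [Fintype V] [DecidableEq V] (G : SimpleGraph V)
    (hn : 2 ≤ Fintype.card V) :
    (sumIndex G = 2 * Fintype.card V - 3 ↔ G = ⊤) ∧
    (sumIndex G = 2 * Fintype.card V - 4 ↔
      ∃ e ∈ (⊤ : SimpleGraph V).edgeSet, G = (⊤ : SimpleGraph V).deleteEdges {e}) :=
  stmt10_general G hn
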